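/- Let Γ be a countable discrete abelian group with compact Pontryagin dual Γ̂ carrying normalized Haar measure λ. Assume that for every finitely supported function c : Γ → ℂ that is not identically zero, the function χ ↦ ∑_{γ∈Γ} c(γ) χ(γ) is nonzero for λ-almost every χ ∈ Γ̂. Let K be a separable complex Hilbert space and π a unitary representation of Γ on K such that for every f ∈ K there exists a finite Borel measure ν_f on Γ̂, absolutely continuous with respect to λ, with ⟨π(γ)f, f⟩ = ∫_{Γ̂} χ(γ) dν_f(χ) for all γ ∈ Γ. Then for every nonzero f ∈ K the family (π(γ) f)_{γ∈Γ} is linearly independent. -/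

import Mathlib

open MeasureTheory

noncomputable section

/-- The action of a unitary operator on a Hilbert space vector. -/
def uact {K : Type*} [NormedAddCommGroup K] [InnerProductSpace ℂ K] [CompleteSpace K]
    (u : unitary (K →L[ℂ] K)) (x : K) : K := (u : K →L[ℂ] K) x

/-!
If `∑ l γ • π γ f = 0`, expand its squared norm: unitarity gives
`⟪π γ f, π γ' f⟫ = ⟪π (γ'⁻¹ * γ) f, f⟫ = ∫ χ γ * conj (χ γ') dν_f`, so
`0 = ∫ |∑ conj (l γ) χ γ|² dν_f` and this character sum vanishes `ν_f`-a.e. By hypothesis it is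
nonzero `λ`-a.e., hence `ν_f`-a.e. since `ν_f ≪ λ`. Thus `ν_f = 0`, and `‖f‖² = ν_f(Γ̂) = 0`.
-/

open ComplexConjugate

section Representation

variable {G K : Type*} [Group G] [NormedAddCommGroup K] [InnerProductSpace ℂ K] [CompleteSpace K]

lemma uact_mul (π : G →* unitary (K →L[ℂ] K)) (g h : G) (x : K) :
    uact (π (g * h)) x = uact (π g) (uact (π h) x) := by
  simp [uact]

lemma inner_uact_uact (π : G →* unitary (K →L[ℂ] K)) (g h : G) (x : K) :
    inner ℂ (uact (π g) x) (uact (π h) x) = inner ℂ (uact (π (h⁻¹ * g)) x) x := by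
  rw [← Unitary.inner_map_map (π h⁻¹) (uact (π g) x), ← uact, ← uact, ← uact_mul, ← uact_mul,
    inv_mul_cancel, map_one]
  rfl

end Representation

section Characters

variable {Γ : Type*} [CommGroup Γ] [TopologicalSpace Γ]

def charSum (c : Γ →₀ ℂ) (χ : PontryaginDual Γ) : ℂ := c.sum fun γ a => a * χ γ

lemma PontryaginDual.coe_apply_inv_mul (χ : PontryaginDual Γ) (γ γ' : Γ) :
    ((χ (γ'⁻¹ * γ) : Circle) : ℂ) = χ γ * conj (χ γ' : ℂ) := by
  rw [_root_.map_mul, map_inv, Circle.coe_mul, Circle.coe_inv_eq_conj, mul_comm]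

lemma PontryaginDual.continuous_coe_apply (γ : Γ) :
    Continuous fun χ : PontryaginDual Γ => ((χ γ : Circle) : ℂ) :=
  continuous_induced_dom.comp
    (continuous_eval_const γ : Continuous fun χ : ContinuousMonoidHom Γ Circle => χ γ)

lemma norm_charSum_le (c : Γ →₀ ℂ) (χ : PontryaginDual Γ) :
    ‖charSum c χ‖ ≤ c.sum fun _ a => ‖a‖ :=
  (norm_sum_le _ _).trans_eq (by simp [Finsupp.sum, Circle.norm_coe])

lemma continuous_charSum (c : Γ →₀ ℂ) : Continuous (charSum c) :=
  continuous_finsetSum _ fun γ _ => continuous_const.mul (PontryaginDual.continuous_coe_apply γ)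

lemma charSum_mapRange_conj (l : Γ →₀ ℂ) (χ : PontryaginDual Γ) :
    charSum (l.mapRange conj (map_zero _)) χ = ∑ γ ∈ l.support, conj (l γ) * χ γ :=
  Finsupp.sum_mapRange_index fun _ => zero_mul _

variable [MeasurableSpace (PontryaginDual Γ)] [BorelSpace (PontryaginDual Γ)]
  (ν : Measure (PontryaginDual Γ)) [IsFiniteMeasure ν]

lemma PontryaginDual.integrable_coe_apply (γ : Γ) :
    Integrable (fun χ : PontryaginDual Γ => ((χ γ : Circle) : ℂ)) ν :=
  .of_bound (PontryaginDual.continuous_coe_apply γ).aestronglyMeasurable 1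
    (.of_forall fun _ => (Circle.norm_coe _).le)

lemma integrable_norm_charSum_sq (c : Γ →₀ ℂ) : Integrable (fun χ => ‖charSum c χ‖ ^ 2) ν :=
  .of_bound ((continuous_charSum c).norm.pow 2).aestronglyMeasurable _
    (.of_forall fun χ => by
      rw [Real.norm_of_nonneg (by positivity)]
      exact pow_le_pow_left₀ (norm_nonneg _) (norm_charSum_le c χ) 2)

variable {K : Type*} [NormedAddCommGroup K] [InnerProductSpace ℂ K] [CompleteSpace K]

lemma inner_linearCombination_self_eq_integral (π : Γ →* unitary (K →L[ℂ] K)) (f : K)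
    (hν : ∀ γ : Γ, inner ℂ (uact (π γ) f) f = ∫ χ, ((χ γ : Circle) : ℂ) ∂ν) (l : Γ →₀ ℂ) :
    inner ℂ (Finsupp.linearCombination ℂ (fun γ => uact (π γ) f) l)
        (Finsupp.linearCombination ℂ (fun γ => uact (π γ) f) l) =
      ∫ χ, charSum (l.mapRange conj (map_zero _)) χ *
        conj (charSum (l.mapRange conj (map_zero _)) χ) ∂ν := by
  have hint (γ γ' : Γ) : Integrable
      (fun χ : PontryaginDual Γ => conj (l γ) * l γ' * ((χ (γ'⁻¹ * γ) : Circle) : ℂ)) ν :=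
    (PontryaginDual.integrable_coe_apply ν _).const_mul _
  calc _ = ∑ γ ∈ l.support, ∑ γ' ∈ l.support,
        conj (l γ) * l γ' * inner ℂ (uact (π γ) f) (uact (π γ') f) := by
        simp only [Finsupp.linearCombination_apply, Finsupp.sum, sum_inner, inner_sum,
          inner_smul_left, inner_smul_right, Finset.mul_sum]
        rw [Finset.sum_comm]
        exact Finset.sum_congr rfl fun _ _ => Finset.sum_congr rfl fun _ _ => by ring
    _ = ∑ γ ∈ l.support, ∑ γ' ∈ l.support,
        ∫ χ, conj (l γ) * l γ' * ((χ (γ'⁻¹ * γ) : Circle) : ℂ) ∂ν := by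
        simp only [inner_uact_uact, hν, integral_const_mul]
    _ = ∫ χ, ∑ γ ∈ l.support, ∑ γ' ∈ l.support,
        conj (l γ) * l γ' * ((χ (γ'⁻¹ * γ) : Circle) : ℂ) ∂ν := by
        rw [integral_finsetSum _ fun γ _ => integrable_finsetSum _ fun γ' _ => hint γ γ']
        exact Finset.sum_congr rfl fun γ _ => (integral_finsetSum _ fun γ' _ => hint γ γ').symm
    _ = _ := by
        congr 1
        ext χ
        simp_rw [PontryaginDual.coe_apply_inv_mul]
        simp only [charSum_mapRange_conj, map_sum, _root_.map_mul, Complex.conj_conj,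
          Finset.sum_mul_sum]
        exact Finset.sum_congr rfl fun _ _ => Finset.sum_congr rfl fun _ _ => by ring

lemma norm_linearCombination_sq_eq_integral (π : Γ →* unitary (K →L[ℂ] K)) (f : K)
    (hν : ∀ γ : Γ, inner ℂ (uact (π γ) f) f = ∫ χ, ((χ γ : Circle) : ℂ) ∂ν) (l : Γ →₀ ℂ) :
    ‖Finsupp.linearCombination ℂ (fun γ => uact (π γ) f) l‖ ^ 2 =
      ∫ χ, ‖charSum (l.mapRange conj (map_zero _)) χ‖ ^ 2 ∂ν := by
  have h := inner_linearCombination_self_eq_integral ν π f hν l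
  simp_rw [Complex.mul_conj, Complex.normSq_eq_norm_sq] at h
  rw [integral_complex_ofReal, inner_self_eq_norm_sq_to_K] at h
  exact RCLike.ofReal_injective (K := ℂ) ((RCLike.ofReal_pow _ 2).trans h)

lemma ae_charSum_eq_zero_of_linearCombination_eq_zero (π : Γ →* unitary (K →L[ℂ] K)) (f : K)
    (hν : ∀ γ : Γ, inner ℂ (uact (π γ) f) f = ∫ χ, ((χ γ : Circle) : ℂ) ∂ν) {l : Γ →₀ ℂ}
    (hl : Finsupp.linearCombination ℂ (fun γ => uact (π γ) f) l = 0) :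
    ∀ᵐ χ ∂ν, charSum (l.mapRange conj (map_zero _)) χ = 0 := by
  have h := norm_linearCombination_sq_eq_integral ν π f hν l
  rw [hl, norm_zero, zero_pow two_ne_zero, eq_comm,
    integral_eq_zero_iff_of_nonneg (fun _ => by positivity) (integrable_norm_charSum_sq ν _)] at h
  filter_upwards [h] with χ hχ
  simpa using hχ

end Characters

theorem stmt11_general
    -- `Γ` : a countable discrete abelian group with compact dual carrying Haar measure `lam`
    {Γ : Type*} [CommGroup Γ]
    [TopologicalSpace Γ]
    [MeasurableSpace (PontryaginDual Γ)] [BorelSpace (PontryaginDual Γ)]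
    (lam : Measure (PontryaginDual Γ))
    -- nontrivial finite character sums are a.e. nonzero
    (hchar : ∀ c : Γ →₀ ℂ, c ≠ 0 →
      ∀ᵐ χ ∂lam, (∑ γ ∈ c.support, c γ * ((χ γ : Circle) : ℂ)) ≠ 0)
    -- `K` : a separable complex Hilbert space, `π` a unitary representation of `Γ` on `K`
    {K : Type*} [NormedAddCommGroup K] [InnerProductSpace ℂ K] [CompleteSpace K]
    (π : Γ →* unitary (K →L[ℂ] K))
    -- `π` has absolutely continuous spectral measure
    (hspec : ∀ f : K, ∃ ν : Measure (PontryaginDual Γ), IsFiniteMeasure ν ∧ ν ≪ lam ∧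
      ∀ γ : Γ, (inner ℂ (uact (π γ) f) f : ℂ) = ∫ χ, ((χ γ : Circle) : ℂ) ∂ν) :
    -- conclusion
    ∀ f : K, f ≠ 0 → LinearIndependent ℂ (fun γ : Γ => uact (π γ) f) := by
  intro f hf
  obtain ⟨ν, hνfin, hνac, hν⟩ := hspec f
  rw [linearIndependent_iff]
  intro l hl
  by_contra hl0
  have hc : l.mapRange conj (map_zero _) ≠ 0 := fun h =>
    hl0 (Finsupp.mapRange_eq_zero (starRingEnd ℂ).injective _ |>.1 h)
  have hν0 : ν = 0 := by
    have h : ∀ᵐ _ ∂ν, False := by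
      filter_upwards [ae_charSum_eq_zero_of_linearCombination_eq_zero ν π f hν hl,
        hνac.ae_le (hchar _ hc)] with χ h_eq h_ne
      exact h_ne h_eq
    simpa using h
  have hff := hν 1
  rw [hν0, integral_zero_measure, map_one] at hff
  exact hf (inner_self_eq_zero.1 hff)

theorem stmt11
    -- `Γ` : a countable discrete abelian group with compact dual carrying Haar measure `lam`
    {Γ : Type*} [CommGroup Γ] [Countable Γ]
    [TopologicalSpace Γ] [DiscreteTopology Γ] [IsTopologicalGroup Γ]
    [MeasurableSpace (PontryaginDual Γ)] [BorelSpace (PontryaginDual Γ)]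
    [CompactSpace (PontryaginDual Γ)]
    (lam : Measure (PontryaginDual Γ)) [lam.IsHaarMeasure] [IsProbabilityMeasure lam]
    -- nontrivial finite character sums are a.e. nonzero
    (hchar : ∀ c : Γ →₀ ℂ, c ≠ 0 →
      ∀ᵐ χ ∂lam, (∑ γ ∈ c.support, c γ * ((χ γ : Circle) : ℂ)) ≠ 0)
    -- `K` : a separable complex Hilbert space, `π` a unitary representation of `Γ` on `K`
    {K : Type*} [NormedAddCommGroup K] [InnerProductSpace ℂ K] [CompleteSpace K]
    [TopologicalSpace.SeparableSpace K]
    (π : Γ →* unitary (K →L[ℂ] K))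
    -- `π` has absolutely continuous spectral measure
    (hspec : ∀ f : K, ∃ ν : Measure (PontryaginDual Γ), IsFiniteMeasure ν ∧ ν ≪ lam ∧
      ∀ γ : Γ, (inner ℂ (uact (π γ) f) f : ℂ) = ∫ χ, ((χ γ : Circle) : ℂ) ∂ν) :
    -- conclusion
    ∀ f : K, f ≠ 0 → LinearIndependent ℂ (fun γ : Γ => uact (π γ) f) :=
  stmt11_general lam hchar π hspec
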